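/- Let φ : G → G' be a half-isomorphism of groups. If x, y ∈ G commute (xy = yx), then φ(x) and φ(y) commute: φ(x)φ(y) = φ(y)φ(x). -/

import Mathlib

/-!
If `φ (x * y) = φ x * φ y`, compare the two ways of bracketing `x * y * y`: either `φ x` and `φ y`
already commute, or `φ (x * y * y) = φ x * φ y * φ y`. When `x` and `y` commute,
`x * y * (x * y) = x * (x * y * y)`, and evaluating `φ` on both sides forces `φ x * φ y = φ y * φ x`
after cancellation. The case `φ (x * y) = φ y * φ x` is the same with `x` and `y` exchanged.
-/

def IsHalfHom {G G' : Type*} [Mul G] [Mul G'] (φ : G → G') : Prop :=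
  ∀ x y : G, φ (x * y) = φ x * φ y ∨ φ (x * y) = φ y * φ x

namespace IsHalfHom

variable {G G' : Type*} {φ : G → G'}

theorem map_mul_self [Mul G] [Mul G'] (hφ : IsHalfHom φ) (z : G) : φ (z * z) = φ z * φ z := by
  rcases hφ z z with h | h <;> exact h

variable [Semigroup G] [Semigroup G'] [IsCancelMul G']

theorem map_mul_mul_self_or_commute (hφ : IsHalfHom φ) {x y : G}
    (hxy : φ (x * y) = φ x * φ y) :
    φ (x * y * y) = φ x * φ y * φ y ∨ Commute (φ x) (φ y) := by
  rcases hφ (x * y) y with h | h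
  · exact .inl (by rw [h, hxy])
  have hleft : φ (x * y * y) = φ y * (φ x * φ y) := by rw [h, hxy]
  rcases hφ x (y * y) with h' | h'
  · exact .inl (by rw [mul_assoc x, h', hφ.map_mul_self, mul_assoc])
  · refine .inr (mul_left_cancel (a := φ y) ?_)
    rw [← hleft, mul_assoc x, h', hφ.map_mul_self, mul_assoc]

theorem commute_of_map_mul (hφ : IsHalfHom φ) {x y : G} (hc : Commute x y)
    (hxy : φ (x * y) = φ x * φ y) : Commute (φ x) (φ y) := by
  refine (hφ.map_mul_mul_self_or_commute hxy).elim (fun hxyy => ?_) id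
  have hsq : φ (x * (x * y * y)) = φ x * φ y * (φ x * φ y) := by
    have : x * (x * y * y) = x * y * (x * y) := by simp only [mul_assoc, hc.symm.left_comm]
    rw [this, hφ.map_mul_self, hxy]
  rcases hφ x (x * y * y) with h | h <;> rw [h, hxyy] at hsq
  · simp only [← mul_assoc, mul_right_cancel_iff] at hsq
    simpa only [commute_iff_eq, mul_assoc, mul_left_cancel_iff] using hsq
  · simpa only [commute_iff_eq, mul_assoc, mul_left_cancel_iff] using hsq.symm

theorem map_commute (hφ : IsHalfHom φ) {x y : G} (hc : Commute x y) :
    Commute (φ x) (φ y) := by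
  rcases hφ x y with h | h
  · exact hφ.commute_of_map_mul hc h
  · exact (hφ.commute_of_map_mul hc.symm (hc.eq ▸ h)).symm

end IsHalfHom

theorem stmt_1_general {G G' : Type*} [Group G] [Group G'] (φ : G → G')
    (hhalf : ∀ x y : G, φ (x * y) = φ x * φ y ∨ φ (x * y) = φ y * φ x)
    (x y : G) (hc : x * y = y * x) :
    φ x * φ y = φ y * φ x :=
  IsHalfHom.map_commute hhalf hc

theorem stmt_1 {G G' : Type*} [Group G] [Group G'] (φ : G → G')
    (hbij : Function.Bijective φ)
    (hhalf : ∀ x y : G, φ (x * y) = φ x * φ y ∨ φ (x * y) = φ y * φ x)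
    (x y : G) (hc : x * y = y * x) :
    φ x * φ y = φ y * φ x :=
  stmt_1_general φ hhalf x y hc
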